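/- arXiv:1105.2415 — 3 statements merged into one kernel-verified Lean document; each statement's English description precedes it below -/
import Mathlib

section
/- Let π : ℝ^n → ℝ^{n'} be a surjective linear map with π(ℤ^n) = ℤ^{n'}, mapping the polytope P onto the full-dimensional rational polytope Q := π(P), and assume P is α-canonical for some α > 0. Then μ(P) ≥ α·μ(Q). In particular, if P is canonical (α = 1), then μ(P) ≥ μ(Q). -/
open scoped BigOperators Pointwise

noncomputable section

/-- Pairing `⟨a, x⟩ = ∑ aⱼ xⱼ` of an integer linear functional with a real point. -/
def ipair {n : ℕ} (a : Fin n → ℤ) (x : Fin n → ℝ) : ℝ := ∑ j, (a j : ℝ) * x j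

/-- An integer vector is primitive if it is nonzero and not a nontrivial integer
multiple of another integer vector. -/
def IsPrimitive {n : ℕ} (a : Fin n → ℤ) : Prop :=
  a ≠ 0 ∧ ∀ (k : ℤ) (b : Fin n → ℤ), a = k • b → IsUnit k

/-- The set of integer (lattice) points of `ℝⁿ`. -/
def IntPts (n : ℕ) : Set (Fin n → ℝ) := Set.range (fun z : Fin n → ℤ => fun j => (z j : ℝ))

/-- The dimension of a subset of `ℝⁿ` (the dimension of its affine hull). -/
def setDim {n : ℕ} (S : Set (Fin n → ℝ)) : ℕ := Module.finrank ℝ (vectorSpan ℝ S)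

/-- An irredundant facet description `P = {x : A x ≥ b}` of an `n`-dimensional
rational polytope: the rows `aᵢ` of `A` are primitive integer vectors, the right hand
sides are rational, `P` is bounded and `n`-dimensional, every inequality defines a facet
(a face of dimension `n-1`), and no inequality is repeated. -/
structure PolyDesc (n m : ℕ) : Type where
  hm : 0 < m
  A : Fin m → Fin n → ℤ
  b : Fin m → ℚ
  prim : ∀ i, IsPrimitive (A i)
  bounded : Bornology.IsBounded {x : Fin n → ℝ | ∀ i, (b i : ℝ) ≤ ipair (A i) x}
  fulldim : setDim {x : Fin n → ℝ | ∀ i, (b i : ℝ) ≤ ipair (A i) x} = n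
  facet_dim : ∀ i, setDim {x : Fin n → ℝ |
      (∀ j, (b j : ℝ) ≤ ipair (A j) x) ∧ ipair (A i) x = (b i : ℝ)} + 1 = n
  irredundant : Function.Injective (fun i => (A i, b i))

namespace PolyDesc

variable {n m : ℕ} (D : PolyDesc n m)

/-- The polytope `P` itself. -/
def pts : Set (Fin n → ℝ) := {x | ∀ i, (D.b i : ℝ) ≤ ipair (D.A i) x}

/-- Lattice distance `d_{Fᵢ}(x) = ⟨aᵢ, x⟩ - bᵢ` from (the hyperplane spanned by)
the `i`-th facet. -/
def dF (i : Fin m) (x : Fin n → ℝ) : ℝ := ipair (D.A i) x - (D.b i : ℝ)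

/-- Lattice distance `d_P(x) = minᵢ d_{Fᵢ}(x)` from the boundary of `P`. -/
def dist (x : Fin n → ℝ) : ℝ :=
  Finset.univ.inf'
    (Finset.univ_nonempty_iff.mpr (Fin.pos_iff_nonempty.mp D.hm))
    (fun i => D.dF i x)

/-- The adjoint polytope `P⁽ˢ⁾ = {x : d_P(x) ≥ s}`. -/
def adj (s : ℝ) : Set (Fin n → ℝ) := {x | s ≤ D.dist x}

/-- The `i`-th facet `Fᵢ` of `P`. -/
def facet (i : Fin m) : Set (Fin n → ℝ) := {x ∈ D.pts | ipair (D.A i) x = (D.b i : ℝ)}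

/-- The set `{s > 0 : P⁽ˢ⁾ ≠ ∅}`, whose supremum is `μ(P)⁻¹`. -/
def qcdInvSet : Set ℝ := {s : ℝ | 0 < s ∧ (D.adj s).Nonempty}

/-- `μ(P)⁻¹ = sup {s > 0 : P⁽ˢ⁾ ≠ ∅}`. -/
def qcdInv : ℝ := sSup D.qcdInvSet

/-- The ℚ-codegree `μ(P) = (sup {s > 0 : P⁽ˢ⁾ ≠ ∅})⁻¹`. -/
def qcd : ℝ := D.qcdInv⁻¹

/-- The core `core(P) = P^{(1/μ(P))}`. -/
def core : Set (Fin n → ℝ) := D.adj D.qcdInv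

/-- The codegree `cd(P) = min {k ∈ ℕ, k ≥ 1 : int(kP) ∩ ℤⁿ ≠ ∅}`. -/
def codeg : ℕ := sInf {k : ℕ | 0 < k ∧
  ∃ z : Fin n → ℤ, (fun j => (z j : ℝ)) ∈ interior ((k : ℝ) • D.pts)}

end PolyDesc

/-- The face of `S` on which the linear functional `u` is maximized. -/
def argFace {n : ℕ} (S : Set (Fin n → ℝ)) (u : Fin n → ℝ) : Set (Fin n → ℝ) :=
  {x ∈ S | ∀ y ∈ S, ∑ j, u j * y j ≤ ∑ j, u j * x j}

/-- `S` and `T` have the same normal fan: two linear functionals lie in the same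
(relatively open) cone of the normal fan of `S`, i.e. are maximized on the same face
of `S`, iff the same holds for `T`. -/
def SameNormalFan {n : ℕ} (S T : Set (Fin n → ℝ)) : Prop :=
  ∀ u v : Fin n → ℝ, (argFace S u = argFace S v ↔ argFace T u = argFace T v)

/-- The normal fan of `S` refines the normal fan of `T`. -/
def RefinesNormalFan {n : ℕ} (S T : Set (Fin n → ℝ)) : Prop :=
  ∀ u v : Fin n → ℝ, argFace S u = argFace S v → argFace T u = argFace T v

namespace PolyDesc
variable {n m : ℕ} (D : PolyDesc n m)

/-- `{s > 0 : N(P⁽ˢ⁾) = N(P)}`, whose supremum is `τ(P)⁻¹`. -/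
def nefInvSet : Set ℝ := {s : ℝ | 0 < s ∧ SameNormalFan (D.adj s) D.pts}

/-- `τ(P)⁻¹ = sup {s > 0 : N(P⁽ˢ⁾) = N(P)}`. -/
def nefInv : ℝ := sSup D.nefInvSet

/-- The nef value `τ(P)`. -/
def nefVal : ℝ := D.nefInv⁻¹

/-- The set of inequalities active at `x`; the normal cone of the minimal face of `P`
containing `x` is generated by `{aᵢ : i ∈ active x}`, and all cones of the normal fan
of `P` arise in this way. -/
def active (x : Fin n → ℝ) : Set (Fin m) := {i | ipair (D.A i) x = (D.b i : ℝ)}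

/-- The normal cone at the vertex `v` is ℚ-Gorenstein of index `r`, witnessed by the
primitive lattice point `u = u_σ` with `⟨aᵢ, u⟩ = r` for all active `i`. -/
def VertexQG (v : Fin n → ℝ) (u : Fin n → ℤ) (r : ℤ) : Prop :=
  IsPrimitive u ∧ 0 < r ∧ ∀ i ∈ D.active v, (∑ j, D.A i j * u j) = r

/-- The normal fan of `P` is ℚ-Gorenstein: every maximal cone (normal cone of a
vertex, i.e. of an extreme point) is ℚ-Gorenstein. -/
def QGorenstein : Prop := ∀ v ∈ Set.extremePoints ℝ D.pts, ∃ u r, D.VertexQG v u r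

end PolyDesc

/-- The point `v(s) = v + (s/r_σ) • u_σ`. -/
def vmove {n : ℕ} (v : Fin n → ℝ) (s : ℝ) (u : Fin n → ℤ) (r : ℤ) : Fin n → ℝ :=
  v + (s / (r : ℝ)) • (fun j => ((u j : ℝ)))

/-- The height of a point `y` in the cone generated by `{aᵢ : i ∈ I}`:
`ht(y) = max {∑ λᵢ : λᵢ ≥ 0, ∑ λᵢ aᵢ = y}`. -/
def coneHeight {n m : ℕ} (D : PolyDesc n m) (I : Set (Fin m)) (y : Fin n → ℝ) : ℝ :=
  sSup {t : ℝ | ∃ c : Fin m → ℝ, (∀ i, 0 ≤ c i) ∧ (∀ i ∉ I, c i = 0) ∧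
    (y = ∑ i, c i • (fun j => ((D.A i j : ℝ)))) ∧ t = ∑ i, c i}

/-- `P` is α-canonical: for every cone `σ` of the normal fan of `P` (the normal cone
of the minimal face containing a point `x ∈ P`, generated by `{aᵢ : i ∈ active x}`),
every nonzero lattice point of `σ` has height at least `α`. -/
def AlphaCanonical {n m : ℕ} (D : PolyDesc n m) (α : ℝ) : Prop :=
  ∀ x ∈ D.pts, ∀ z : Fin n → ℤ, z ≠ 0 →
    (∃ c : Fin m → ℝ, (∀ i, 0 ≤ c i) ∧ (∀ i ∉ D.active x, c i = 0) ∧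
      ((fun j => ((z j : ℝ))) = ∑ i, c i • (fun j => ((D.A i j : ℝ))))) →
    α ≤ coneHeight D (D.active x) (fun j => ((z j : ℝ)))

/-- `P` is a lattice polytope: the convex hull of finitely many integer points. -/
def IsLatticePoly {n : ℕ} (P : Set (Fin n → ℝ)) : Prop :=
  ∃ V : Finset (Fin n → ℤ),
    P = convexHull ℝ ((fun z : Fin n → ℤ => fun j => ((z j : ℝ))) '' (V : Set (Fin n → ℤ)))

/-- The `i`-th standard basis vector of `ℝᵗ`. -/
def stdBasisVec (t : ℕ) (i : Fin t) : Fin t → ℝ := fun j => if j = i then 1 else 0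

/-- The marking vectors of a Cayley sum: `0, e₁, …, e_t ∈ ℝᵗ`. -/
def cayleyVec (t : ℕ) : Fin (t + 1) → (Fin t → ℝ) :=
  fun j => if h : (j : ℕ) = 0 then 0 else stdBasisVec t ⟨(j : ℕ) - 1, by have := j.isLt; omega⟩

/-- The Cayley sum `Q₀ * ⋯ * Q_t = conv((Q₀ × {0}) ∪ (Q₁ × {e₁}) ∪ ⋯ ∪ (Q_t × {e_t}))`. -/
def cayleySum {k t : ℕ} (Q : Fin (t + 1) → Set (Fin k → ℝ)) :
    Set ((Fin k → ℝ) × (Fin t → ℝ)) :=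
  convexHull ℝ (⋃ j, (Q j) ×ˢ ({cayleyVec t j} : Set (Fin t → ℝ)))

/-- `P ⊆ ℝⁿ` is a Cayley polytope `P₀ * ⋯ * P_t` of length `t+1` of lattice polytopes
`Pⱼ ⊆ ℝᵏ` with `k + t = n`: some affine lattice isomorphism `ℤⁿ ≅ ℤᵏ × ℤᵗ`
identifies `P` with such a Cayley sum. -/
def IsCayley {n : ℕ} (P : Set (Fin n → ℝ)) (k t : ℕ) : Prop :=
  k + t = n ∧
  ∃ Q : Fin (t + 1) → Finset (Fin k → ℤ), (∀ j, (Q j).Nonempty) ∧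
  ∃ f : (Fin n → ℝ) ≃ᵃ[ℝ] (Fin k → ℝ) × (Fin t → ℝ),
    f '' IntPts n = (IntPts k) ×ˢ (IntPts t) ∧
    f '' P = cayleySum (fun j =>
      convexHull ℝ ((fun z : Fin k → ℤ => fun i => ((z i : ℝ))) '' (Q j : Set (Fin k → ℤ))))

/-- The unimodular simplex `Δₙ = conv(0, e₁, …, eₙ)`. -/
def unimodSimplex (n : ℕ) : Set (Fin n → ℝ) :=
  convexHull ℝ (insert (0 : Fin n → ℝ) (Set.range (stdBasisVec n)))

/-- Two subsets of `ℝⁿ` are unimodularly equivalent: an affine lattice automorphism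
maps one onto the other. -/
def UnimodEquiv {n : ℕ} (P P' : Set (Fin n → ℝ)) : Prop :=
  ∃ f : (Fin n → ℝ) ≃ᵃ[ℝ] (Fin n → ℝ), f '' IntPts n = IntPts n ∧ f '' P = P'

/-- The codegree `cd(P) = min {k ∈ ℕ, k ≥ 1 : int(kP) ∩ ℤⁿ ≠ ∅}` of a polytope given
as a set. -/
def codegS {n : ℕ} (P : Set (Fin n → ℝ)) : ℕ :=
  sInf {k : ℕ | 0 < k ∧ ∃ z : Fin n → ℤ, (fun j => (z j : ℝ)) ∈ interior ((k : ℝ) • P)}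

/-- `P` has lattice width one: some nonzero integer linear functional has minimum `c`
and maximum `c + 1` on `P`. -/
def HasLatticeWidthOne {n : ℕ} (P : Set (Fin n → ℝ)) : Prop :=
  ∃ u : Fin n → ℤ, u ≠ 0 ∧ ∃ c : ℤ,
    (∀ x ∈ P, (c : ℝ) ≤ ipair u x ∧ ipair u x ≤ (c : ℝ) + 1) ∧
    (∃ x ∈ P, ipair u x = (c : ℝ)) ∧ (∃ x ∈ P, ipair u x = (c : ℝ) + 1)

/-- `P` is a lattice pyramid: for some primitive `u`, `P` is the convex hull of a base
lying in the lattice hyperplane `{⟨u, ·⟩ = c}` and an apex at lattice distance one from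
it (this is equivalent to being unimodularly equivalent to
`conv((Q × {0}) ∪ {(0, …, 0, 1)})` for an `(n-1)`-dimensional lattice polytope `Q`). -/
def IsLatticePyramid {n : ℕ} (P : Set (Fin n → ℝ)) : Prop :=
  ∃ u : Fin n → ℤ, IsPrimitive u ∧ ∃ c : ℤ, ∃ apex ∈ P,
    ipair u apex = (c : ℝ) + 1 ∧
    P = convexHull ℝ ({x ∈ P | ipair u x = (c : ℝ)} ∪ {apex})

/-- `F` is a facet of `S`: an exposed face of dimension `dim S - 1`. -/
def IsFacetOf {n : ℕ} (F S : Set (Fin n → ℝ)) : Prop :=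
  IsExposed ℝ S F ∧ F.Nonempty ∧ setDim F + 1 = setDim S

/-!
Let `x ∈ P⁽ˢ⁾` and let `⟨a', ·⟩ ≥ b'` be a facet inequality of `Q`. Since `π` maps lattice
points to lattice points, `z := a' ∘ π` is an integer functional, nonzero because `π` is
onto. At a point `x₀ ∈ P` minimising `z`, Farkas' lemma puts `z` in the normal cone of `P`
at `x₀`: `z = ∑ cᵢ aᵢ` with `cᵢ ≥ 0` supported on the facets through `x₀`, and
`∑ cᵢ ≥ α` by `α`-canonicity. Hence
`⟨a', π x⟩ - b' ≥ ⟨z, x⟩ - ⟨z, x₀⟩ = ∑ cᵢ d_{Fᵢ}(x) ≥ α s`, i.e. `π(P⁽ˢ⁾) ⊆ Q⁽ᵅˢ⁾`,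
and taking suprema gives `μ(Q)⁻¹ ≥ α μ(P)⁻¹`.
-/

open Filter Topology

section ConicHull

open Function

variable {ι E : Type*} [Fintype ι]

def conicHull [AddCommGroup E] [Module ℝ E] (v : ι → E) (I : Set ι) : Set E :=
  {y | ∃ c : ι → ℝ, (∀ i, 0 ≤ c i) ∧ (∀ i ∉ I, c i = 0) ∧ y = ∑ i, c i • v i}

variable [AddCommGroup E] [Module ℝ E] {v : ι → E}

theorem exists_support_ssubset_of_not_linearIndepOn {c : ι → ℝ} (hc : 0 ≤ c)
    (hdep : ¬LinearIndepOn ℝ v (support c)) :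
    ∃ c' : ι → ℝ, 0 ≤ c' ∧ support c' ⊂ support c ∧ ∑ i, c' i • v i = ∑ i, c i • v i := by
  classical
  obtain ⟨g, hg, hgc, i₀, hi₀⟩ :
      ∃ g : ι → ℝ, ∑ i, g i • v i = 0 ∧ support g ⊆ support c ∧ ∃ i, 0 < g i := by
    rw [← Set.coe_toFinset (support c), not_linearIndepOn_finset_iff] at hdep
    obtain ⟨f, hf, i, hi, hfi⟩ := hdep
    have hsum : ∑ j, (support c).indicator f j • v j = 0 := by
      simp_rw [← Set.indicator_smul_apply_left]
      rw [← Set.coe_toFinset (support c), Finset.sum_indicator_subset _ (Finset.subset_univ _), hf]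
    have hsupp : support ((support c).indicator f) ⊆ support c := Set.support_indicator_subset
    have hfi' : (support c).indicator f i ≠ 0 := by
      rwa [Set.indicator_of_mem (by simpa using hi)]
    rcases hfi'.lt_or_gt with hneg | hpos
    · exact ⟨-(support c).indicator f, by simp [neg_smul, hsum], by rwa [support_neg],
        i, by simpa using hneg⟩
    · exact ⟨_, hsum, hsupp, i, hpos⟩
  -- Subtract from `c` the largest multiple of the dependency `g` that keeps it nonnegative.
  obtain ⟨i₁, hi₁, hmin⟩ := (Finset.univ.filter fun i => 0 < g i).exists_min_image
    (fun i => c i / g i) ⟨i₀, by simpa using hi₀⟩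
  simp only [Finset.mem_filter, Finset.mem_univ, true_and] at hi₁ hmin
  set t := c i₁ / g i₁
  have ht : 0 ≤ t := div_nonneg (hc i₁) hi₁.le
  refine ⟨c - t • g, fun i => ?_, ?_, ?_⟩
  · rcases le_or_gt (g i) 0 with hgi | hgi
    · simp only [Pi.zero_apply, Pi.sub_apply, Pi.smul_apply, smul_eq_mul, sub_nonneg]
      linarith [show (0 : ℝ) ≤ c i from hc i, mul_nonpos_of_nonneg_of_nonpos ht hgi]
    · simpa using (le_div_iff₀ hgi).1 (hmin i hgi)
  · refine ⟨fun i hi => by_contra fun hci => hi ?_, fun h => ?_⟩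
    · have hgi : g i = 0 := notMem_support.1 fun hgi => hci (hgc hgi)
      simp [notMem_support.1 hci, hgi]
    · have : i₁ ∈ support (c - t • g) := h (hgc hi₁.ne')
      simp [t, hi₁.ne'] at this
  · simp only [Pi.sub_apply, Pi.smul_apply, smul_eq_mul, sub_smul, mul_smul,
      Finset.sum_sub_distrib, ← Finset.smul_sum, hg, smul_zero, sub_zero]

theorem exists_linearIndepOn_support {c : ι → ℝ} (hc : 0 ≤ c) :
    ∃ c' : ι → ℝ, 0 ≤ c' ∧ support c' ⊆ support c ∧ ∑ i, c' i • v i = ∑ i, c i • v i ∧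
      LinearIndepOn ℝ v (support c') := by
  obtain ⟨_, ⟨c', hc', rfl⟩, hmin⟩ := wellFounded_lt.has_min
    (support '' {c' : ι → ℝ | 0 ≤ c' ∧ support c' ⊆ support c ∧
      ∑ i, c' i • v i = ∑ i, c i • v i}) ⟨_, c, ⟨hc, subset_rfl, rfl⟩, rfl⟩
  refine ⟨c', hc'.1, hc'.2.1, hc'.2.2, by_contra fun hdep => ?_⟩
  obtain ⟨c'', hc'', hlt, hsum⟩ := exists_support_ssubset_of_not_linearIndepOn hc'.1 hdep
  exact hmin _ ⟨c'', ⟨hc'', hlt.subset.trans hc'.2.1, hsum.trans hc'.2.2⟩, rfl⟩ hlt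

variable [TopologicalSpace E] [IsTopologicalAddGroup E] [ContinuousSMul ℝ E] [T2Space E]

theorem isClosed_conicHull_of_linearIndepOn {I : Set ι} (hv : LinearIndepOn ℝ v I) :
    IsClosed (conicHull v I) := by
  classical
  have hsum : ∀ f : ι → E, (∀ i ∉ I, f i = 0) → ∑ i : I, f i = ∑ i, f i := fun f hf => by
    rw [Finset.sum_set_coe]
    exact Finset.sum_subset (Finset.subset_univ _) fun i _ hi => hf i (by simpa using hi)
  have himage : conicHull v I = Fintype.linearCombination ℝ (fun i : I => v i) '' Set.Ici 0 := by
    ext y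
    simp only [Set.mem_image, Set.mem_Ici, Fintype.linearCombination_apply]
    constructor
    · rintro ⟨c, hc, hcI, rfl⟩
      exact ⟨fun i => c i, fun i => hc i, hsum (fun i => c i • v i) fun i hi => by simp [hcI i hi]⟩
    · rintro ⟨d, hd, rfl⟩
      refine ⟨fun i => if h : i ∈ I then d ⟨i, h⟩ else 0, fun i => ?_, fun i hi => dif_neg hi, ?_⟩
      · dsimp only
        split_ifs
        exacts [hd _, le_rfl]
      · rw [← hsum _ fun i hi => by simp [hi]]
        simp
  rw [himage]
  exact (LinearMap.isClosedEmbedding_of_injective (LinearMap.ker_eq_bot.2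
    hv.fintypeLinearCombination_injective)).isClosedMap _ isClosed_Ici

theorem isClosed_conicHull (I : Set ι) : IsClosed (conicHull v I) := by
  have hunion : conicHull v I =
      ⋃ (J : Set ι) (_ : J ⊆ I ∧ LinearIndepOn ℝ v J), conicHull v J := by
    ext y
    simp only [Set.mem_iUnion]
    constructor
    · rintro ⟨c, hc, hcI, rfl⟩
      obtain ⟨c', hc', hsupp, hsum, hli⟩ := exists_linearIndepOn_support (v := v) hc
      exact ⟨support c', ⟨fun i hi => by_contra fun hiI => hsupp hi (hcI i hiI), hli⟩,
        c', hc', fun i hi => by simpa using hi, hsum.symm⟩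
    · rintro ⟨J, ⟨hJI, -⟩, c, hc, hcJ, rfl⟩
      exact ⟨c, hc, fun i hi => hcJ i fun hiJ => hi (hJI hiJ), rfl⟩
  rw [hunion]
  exact isClosed_iUnion_of_finite fun J =>
    isClosed_iUnion_of_finite fun hJ => isClosed_conicHull_of_linearIndepOn hJ.2

end ConicHull

section Farkas

variable {ι κ : Type*} [Fintype ι] [Fintype κ]

theorem exists_dotProduct_neg_of_notMem_conicHull {a : ι → κ → ℝ} {I : Set ι} {z : κ → ℝ}
    (hz : z ∉ conicHull a I) : ∃ w : κ → ℝ, (∀ i ∈ I, 0 ≤ a i ⬝ᵥ w) ∧ z ⬝ᵥ w < 0 := by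
  classical
  let C : ProperCone ℝ (κ → ℝ) :=
    { carrier := conicHull a I
      add_mem' := by
        rintro _ _ ⟨c, hc, hcI, rfl⟩ ⟨d, hd, hdI, rfl⟩
        exact ⟨c + d, fun i => add_nonneg (hc i) (hd i), fun i hi => by simp [hcI i hi, hdI i hi],
          by simp [add_smul, Finset.sum_add_distrib]⟩
      zero_mem' := ⟨0, fun _ => le_rfl, fun _ _ => rfl, by simp⟩
      smul_mem' := by
        rintro r _ ⟨c, hc, hcI, rfl⟩
        exact ⟨fun i => r * c i, fun i => mul_nonneg r.2 (hc i), fun i hi => by simp [hcI i hi],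
          by simp [Finset.smul_sum, mul_smul]⟩
      isClosed' := isClosed_conicHull I }
  obtain ⟨f, hfC, hfz⟩ := C.hyperplane_separation_point hz
  set w : κ → ℝ := fun j => f fun k => if j = k then 1 else 0
  have hf : ∀ y, f y = y ⬝ᵥ w := fun y =>
    LinearMap.pi_apply_eq_sum_univ (f : (κ → ℝ) →ₗ[ℝ] ℝ) y
  refine ⟨w, fun i hi => ?_, by rwa [← hf]⟩
  rw [← hf]
  refine hfC _ ⟨Pi.single i 1, fun j => ?_, fun j hj => ?_, by simp [Pi.single_apply]⟩
  · by_cases hji : j = i <;> simp [hji]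
  · simp [show j ≠ i by rintro rfl; exact hj hi]

theorem exists_pos_add_smul_mem {a : ι → κ → ℝ} {b : ι → ℝ} {x₀ w : κ → ℝ}
    (hx₀ : ∀ i, b i ≤ a i ⬝ᵥ x₀) (hw : ∀ i, a i ⬝ᵥ x₀ = b i → 0 ≤ a i ⬝ᵥ w) :
    ∃ ε : ℝ, 0 < ε ∧ ∀ i, b i ≤ a i ⬝ᵥ (x₀ + ε • w) := by
  have hev : ∀ i, ∀ᶠ ε in 𝓝[>] (0 : ℝ), b i ≤ a i ⬝ᵥ (x₀ + ε • w) := by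
    intro i
    simp only [dotProduct_add, dotProduct_smul, smul_eq_mul]
    rcases (hx₀ i).eq_or_lt with hact | hslack
    · filter_upwards [self_mem_nhdsWithin] with ε hε
      nlinarith [hw i hact.symm, Set.mem_Ioi.1 hε]
    · refine nhdsWithin_le_nhds (((continuous_const.add
        (continuous_id.mul continuous_const)).tendsto' 0 _ (by simp)).eventually
        (lt_mem_nhds hslack) |>.mono fun ε hε => hε.le)
  obtain ⟨ε, hε, hmem⟩ := ((eventually_all.2 hev).and self_mem_nhdsWithin).exists
  exact ⟨ε, hmem, hε⟩

theorem mem_conicHull_of_isMinOn {a : ι → κ → ℝ} {b : ι → ℝ} {z x₀ : κ → ℝ}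
    (hx₀ : ∀ i, b i ≤ a i ⬝ᵥ x₀)
    (hmin : IsMinOn (z ⬝ᵥ ·) {x | ∀ i, b i ≤ a i ⬝ᵥ x} x₀) :
    z ∈ conicHull a {i | a i ⬝ᵥ x₀ = b i} := by
  by_contra hz
  obtain ⟨w, hwa, hwz⟩ := exists_dotProduct_neg_of_notMem_conicHull hz
  obtain ⟨ε, hε, hmem⟩ := exists_pos_add_smul_mem hx₀ hwa
  have hle : z ⬝ᵥ x₀ ≤ z ⬝ᵥ (x₀ + ε • w) := hmin hmem
  rw [dotProduct_add, dotProduct_smul, smul_eq_mul] at hle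
  nlinarith

end Farkas

theorem ipair_eq_dotProduct {n : ℕ} (a : Fin n → ℤ) (x : Fin n → ℝ) :
    ipair a x = (fun j => (a j : ℝ)) ⬝ᵥ x := rfl

theorem continuous_ipair {n : ℕ} (a : Fin n → ℤ) : Continuous (ipair a) :=
  continuous_const.dotProduct continuous_id

theorem ipair_self_pos {n : ℕ} {a : Fin n → ℤ} (ha : a ≠ 0) :
    0 < ipair a (fun j => (a j : ℝ)) := by
  refine lt_of_le_of_ne (Finset.sum_nonneg fun j _ => mul_self_nonneg _) fun h => ha ?_
  ext j
  simpa using congrFun (dotProduct_self_eq_zero.1 h.symm) j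

section LatticePullback

variable {n n' : ℕ} {π : (Fin n → ℝ) →ₗ[ℝ] (Fin n' → ℝ)}

theorem exists_ipair_comp (hlat : π '' IntPts n ⊆ IntPts n') (a : Fin n' → ℤ) :
    ∃ z : Fin n → ℤ, ∀ y, ipair z y = ipair a (π y) := by
  classical
  have hint : ∀ j, ∃ w : Fin n' → ℤ,
      (fun k => (w k : ℝ)) = π fun k => if j = k then 1 else 0 := fun j =>
    hlat ⟨_, ⟨fun k => if j = k then 1 else 0, by ext k; split_ifs <;> simp_all⟩, rfl⟩
  choose w hw using hint
  refine ⟨fun j => ∑ k, a k * w j k, fun y => ?_⟩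
  rw [LinearMap.pi_apply_eq_sum_univ π y, ipair_eq_dotProduct, ipair_eq_dotProduct,
    dotProduct_sum]
  refine Finset.sum_congr rfl fun j _ => ?_
  rw [← hw, dotProduct_smul, smul_eq_mul, mul_comm]
  push_cast [dotProduct]
  rfl

theorem ne_zero_of_ipair_comp (hsurj : Function.Surjective π) {a : Fin n' → ℤ} {z : Fin n → ℤ}
    (ha : a ≠ 0) (hz : ∀ y, ipair z y = ipair a (π y)) : z ≠ 0 := by
  rintro rfl
  obtain ⟨y, hy⟩ := hsurj fun k => (a k : ℝ)
  have hpos := ipair_self_pos ha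
  rw [← hy, ← hz] at hpos
  simp [ipair] at hpos

end LatticePullback

namespace PolyDesc

variable {n m : ℕ} (D : PolyDesc n m)

theorem isCompact_pts : IsCompact D.pts := by
  refine Metric.isCompact_of_isClosed_isBounded ?_ D.bounded
  simp only [pts, Set.ofPred_forall]
  exact isClosed_iInter fun i => isClosed_le continuous_const (continuous_ipair _)

theorem convex_pts : Convex ℝ D.pts := by
  simp only [pts, Set.ofPred_forall]
  exact convex_iInter fun i => convex_halfSpace_ge
    ⟨fun x y => dotProduct_add _ x y, fun r x => dotProduct_smul r _ x⟩ _

theorem mem_adj_iff {s : ℝ} {x : Fin n → ℝ} : x ∈ D.adj s ↔ ∀ i, s ≤ D.dF i x :=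
  by simp [adj, dist, Finset.le_inf'_iff]

theorem adj_subset_pts {s : ℝ} (hs : 0 ≤ s) : D.adj s ⊆ D.pts := fun x hx i => by
  have := (D.mem_adj_iff.1 hx) i
  simp only [dF] at this
  linarith

theorem lt_ipair_of_mem_interior {x : Fin n → ℝ} (hx : x ∈ interior D.pts) (i : Fin m) :
    (D.b i : ℝ) < ipair (D.A i) x := by
  set v : Fin n → ℝ := fun j => (D.A i j : ℝ)
  have hev : ∀ᶠ t in 𝓝[>] (0 : ℝ), x - t • v ∈ D.pts := nhdsWithin_le_nhds <|
    ((continuous_const.sub (continuous_id.smul continuous_const)).tendsto' 0 x (by simp)).eventually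
      (mem_interior_iff_mem_nhds.1 hx)
  obtain ⟨t, hxt, ht⟩ := (hev.and self_mem_nhdsWithin).exists
  have hle := hxt i
  have hv := ipair_self_pos (D.prim i).1
  rw [ipair_eq_dotProduct, dotProduct_sub, dotProduct_smul, smul_eq_mul] at hle
  rw [ipair_eq_dotProduct] at hv ⊢
  nlinarith [ht]

theorem interior_pts_nonempty : (interior D.pts).Nonempty := by
  have hn : 0 < n := by have := D.facet_dim ⟨0, D.hm⟩; omega
  have hdim : Module.finrank ℝ (vectorSpan ℝ D.pts) = n := D.fulldim
  have hne : D.pts.Nonempty := by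
    by_contra h
    rw [Set.not_nonempty_iff_eq_empty.1 h, vectorSpan_empty, finrank_bot] at hdim
    omega
  rw [D.convex_pts.interior_nonempty_iff_affineSpan_eq_top,
    AffineSubspace.affineSpan_eq_top_iff_vectorSpan_eq_top_of_nonempty ℝ _ _ hne]
  exact Submodule.eq_top_of_finrank_eq (by rw [hdim, Module.finrank_fin_fun])

theorem qcdInvSet_nonempty : D.qcdInvSet.Nonempty := by
  obtain ⟨x, hx⟩ := D.interior_pts_nonempty
  refine ⟨D.dist x, ?_, x, (le_rfl : D.dist x ≤ D.dist x)⟩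
  simp only [dist, Finset.lt_inf'_iff, Finset.mem_univ, forall_const, dF, sub_pos]
  exact D.lt_ipair_of_mem_interior hx

theorem qcdInvSet_bddAbove : BddAbove D.qcdInvSet := by
  obtain ⟨M, hM⟩ := D.isCompact_pts.bddAbove_image (f := D.dF ⟨0, D.hm⟩)
    ((continuous_ipair _).sub continuous_const).continuousOn
  exact ⟨M, fun _ ⟨hs, x, hx⟩ => ((D.mem_adj_iff.1 hx) _).trans
    (hM ⟨x, D.adj_subset_pts hs.le hx, rfl⟩)⟩

theorem qcdInv_pos : 0 < D.qcdInv := by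
  obtain ⟨s, hs⟩ := D.qcdInvSet_nonempty
  exact hs.1.trans_le (le_csSup D.qcdInvSet_bddAbove hs)

theorem mul_coneHeight_le {s : ℝ} (hs : 0 < s) {x x₀ y : Fin n → ℝ} (hx : x ∈ D.adj s)
    (hy : y ∈ conicHull (fun i j => (D.A i j : ℝ)) (D.active x₀)) :
    s * coneHeight D (D.active x₀) y ≤ y ⬝ᵥ x - y ⬝ᵥ x₀ := by
  rw [← le_div_iff₀' hs]
  obtain ⟨c, hc, hcI, hyc⟩ := hy
  refine csSup_le ⟨_, c, hc, hcI, hyc, rfl⟩ ?_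
  rintro _ ⟨c', hc', hc'I, rfl, rfl⟩
  rw [le_div_iff₀' hs, sum_dotProduct, sum_dotProduct, ← Finset.sum_sub_distrib, Finset.mul_sum]
  refine Finset.sum_le_sum fun i _ => ?_
  rw [smul_dotProduct, smul_dotProduct, smul_eq_mul, smul_eq_mul, ← mul_sub]
  by_cases hi : i ∈ D.active x₀
  · have hsi : s ≤ D.dF i x := D.mem_adj_iff.1 hx i
    have hact : ipair (D.A i) x₀ = D.b i := hi
    simp only [dF, ipair_eq_dotProduct] at hsi hact
    nlinarith [hc' i]
  · simp [hc'I i hi]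

theorem map_mem_adj_of_alphaCanonical {n' m' : ℕ} (D' : PolyDesc n' m')
    {π : (Fin n → ℝ) →ₗ[ℝ] (Fin n' → ℝ)} (hsurj : Function.Surjective π)
    (hlat : π '' IntPts n ⊆ IntPts n') (hQ : π '' D.pts ⊆ D'.pts) {α : ℝ}
    (hcan : AlphaCanonical D α) {s : ℝ} (hs : 0 < s)
    {x : Fin n → ℝ} (hx : x ∈ D.adj s) : π x ∈ D'.adj (α * s) := by
  refine D'.mem_adj_iff.2 fun i' => ?_
  obtain ⟨z, hz⟩ := exists_ipair_comp hlat (D'.A i')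
  obtain ⟨x₀, hx₀, hmin⟩ := D.isCompact_pts.exists_isMinOn ⟨x, D.adj_subset_pts hs.le hx⟩
    (continuous_ipair z).continuousOn
  have hcone : (fun j => (z j : ℝ)) ∈ conicHull (fun i j => (D.A i j : ℝ)) (D.active x₀) :=
    mem_conicHull_of_isMinOn (b := fun i => (D.b i : ℝ)) hx₀ hmin
  have hheight := hcan x₀ hx₀ z (ne_zero_of_ipair_comp hsurj (D'.prim i').1 hz) hcone
  have hbound := D.mul_coneHeight_le hs hx hcone
  have hx₀Q : (D'.b i' : ℝ) ≤ ipair (D'.A i') (π x₀) := hQ ⟨x₀, hx₀, rfl⟩ i'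
  rw [← ipair_eq_dotProduct, ← ipair_eq_dotProduct, hz, hz] at hbound
  simp only [dF]
  nlinarith

theorem mul_qcd_le_of_smul_subset {n' m' : ℕ} (D' : PolyDesc n' m') {α : ℝ} (hα : 0 < α)
    (h : α • D.qcdInvSet ⊆ D'.qcdInvSet) : α * D'.qcd ≤ D.qcd := by
  have hinv : α * D.qcdInv ≤ D'.qcdInv := by
    rw [← smul_eq_mul, qcdInv, ← Real.sSup_smul_of_nonneg hα.le]
    exact csSup_le_csSup D'.qcdInvSet_bddAbove (D.qcdInvSet_nonempty.smul_set) h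
  calc α * D'.qcdInv⁻¹ ≤ α * (α * D.qcdInv)⁻¹ := by
        gcongr
        exact mul_pos hα D.qcdInv_pos
    _ = D.qcdInv⁻¹ := by field_simp

end PolyDesc

/-- Let `π : ℝⁿ → ℝ^{n'}` be a surjective linear map with
`π(ℤⁿ) = ℤ^{n'}` mapping `P` onto the full-dimensional rational polytope `Q = π(P)`
(with irredundant facet description `D'`), and assume `P` is `α`-canonical for some
`α > 0`. Then `μ(P) ≥ α · μ(Q)`; in particular, if `P` is canonical (`α = 1`),
then `μ(P) ≥ μ(Q)`. -/
theorem statement10 {n m n' : ℕ} (D : PolyDesc n m)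
    (π : (Fin n → ℝ) →ₗ[ℝ] (Fin n' → ℝ))
    (hsurj : Function.Surjective π)
    (hlat : π '' IntPts n = IntPts n')
    (α : ℝ) (hα : 0 < α) (hcan : AlphaCanonical D α)
    {m' : ℕ} (D' : PolyDesc n' m') (hQ : D'.pts = π '' D.pts) :
    α * D'.qcd ≤ D.qcd ∧ (α = 1 → D'.qcd ≤ D.qcd) := by
  have hle : α * D'.qcd ≤ D.qcd := D.mul_qcd_le_of_smul_subset D' hα <| by
    rintro _ ⟨s, ⟨hs, x, hx⟩, rfl⟩
    exact ⟨mul_pos hα hs, π x,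
      D.map_mem_adj_of_alphaCanonical D' hsurj hlat.subset hQ.ge hcan hs hx⟩
  exact ⟨hle, fun h => by simpa [h] using hle⟩
end
end

section
/- Let P ⊆ ℝ^n be an n-dimensional lattice polytope and let z ∈ pos(P × {1}) ∩ ℤ^{n+1}, where pos(P × {1}) is the cone generated by P × {1}. Then there exist (not necessarily distinct) vertices v_1,…,v_g of P (possibly g = 0), an integer j ≥ 0 and a lattice point p ∈ (jP) ∩ ℤ^n such that z = (v_1,1) + ⋯ + (v_g,1) + (p,j), where either (p,j) = (0,0) or 1 ≤ j ≤ n + 1 − cd(P). -/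
open scoped BigOperators Pointwise

noncomputable section

/-!
Write `z = k • (x, 1)` and choose, by Carathéodory, a simplex of vertices `b₀, …, bₙ` of `P`
containing `x`, so that `z.1 = ∑ λᵢ bᵢ` with `λᵢ ≥ 0` and `∑ λᵢ = k`. Splitting
`λᵢ = ⌊λᵢ⌋ + fᵢ` yields `⌊λᵢ⌋` copies of `(bᵢ, 1)` plus `(p, j) = (∑ fᵢ bᵢ, ∑ fᵢ)`, a lattice
point with `p ∈ jP` and `j ≤ n`. When `j > 0`, the reflected point `∑ (1 - fᵢ) bᵢ` is a
lattice point with strictly positive barycentric coordinates, so it lies in the interior of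
`(n + 1 - j) P`, whence `cd(P) ≤ n + 1 - j`.
-/

open Set

theorem exists_fin_sum_eq_sum_nsmul {ι α : Type*} [Fintype ι] [AddCommMonoid α]
    (b : ι → α) (m : ι → ℕ) :
    ∃ (g : ℕ) (v : Fin g → α), (∀ i, v i ∈ range b) ∧ ∑ i, v i = ∑ i, m i • b i ∧
      g = ∑ i, m i := by
  let l := Finset.univ.toList.flatMap fun i => List.replicate (m i) (b i)
  refine ⟨l.length, fun i => l[i.1], fun i => ?_, ?_, ?_⟩
  · obtain ⟨k, -, hk⟩ := List.mem_flatMap.mp (List.getElem_mem i.isLt)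
    exact ⟨k, (List.eq_of_mem_replicate hk).symm⟩
  · simp only [Fin.sum_univ_getElem]
    simp [l, List.flatMap, List.sum_flatten, Function.comp_def, Finset.sum_map_toList]
  · simp [l, List.length_flatMap, Finset.sum_map_toList]

theorem exists_nat_add_fract_of_sum_eq_nat {ι : Type*} [Fintype ι] {w : ι → ℝ}
    (hw : ∀ i, 0 ≤ w i) {k : ℕ} (hk : ∑ i, w i = k) :
    ∃ (m : ι → ℕ) (f : ι → ℝ) (j : ℕ), (∀ i, 0 ≤ f i ∧ f i < 1) ∧ (∀ i, w i = m i + f i) ∧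
      ∑ i, f i = j ∧ k = ∑ i, m i + j := by
  have hmk : ∑ i, ⌊w i⌋₊ ≤ k := by
    have : ((∑ i, ⌊w i⌋₊ : ℕ) : ℝ) ≤ k := by
      rw [← hk, Nat.cast_sum]
      exact Finset.sum_le_sum fun i _ => Nat.floor_le (hw i)
    exact_mod_cast this
  refine ⟨fun i => ⌊w i⌋₊, fun i => w i - ⌊w i⌋₊, k - ∑ i, ⌊w i⌋₊,
    fun i => ⟨sub_nonneg.mpr (Nat.floor_le (hw i)), ?_⟩, fun i => by ring, ?_,
    (Nat.add_sub_cancel' hmk).symm⟩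
  · linarith [Nat.lt_floor_add_one (w i)]
  · rw [Finset.sum_sub_distrib, hk, Nat.cast_sub hmk, Nat.cast_sum]

theorem AffineIndependent.exists_extension_affineSpan_eq_top {k V P : Type*} [DivisionRing k]
    [AddCommGroup V] [Module k V] [AddTorsor V P] {s t : Set P}
    (hs : AffineIndependent k ((↑) : s → P)) (hst : s ⊆ t) (ht : affineSpan k t = ⊤) :
    ∃ u, s ⊆ u ∧ u ⊆ t ∧ AffineIndependent k ((↑) : u → P) ∧ affineSpan k u = ⊤ := by
  rcases s.eq_empty_or_nonempty with rfl | ⟨p, hp⟩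
  · obtain ⟨u, hut, hspan, hu⟩ := exists_affineIndependent k V t
    exact ⟨u, empty_subset u, hut, hu, hspan.trans ht⟩
  rw [affineIndependent_set_iff_linearIndependent_vsub k hp] at hs
  obtain ⟨b, hbt, hsb, htb, hb⟩ := exists_linearIndepOn_id_extension hs
    (image_mono (sdiff_subset_sdiff_left hst) : (· -ᵥ p) '' (s \ {p}) ⊆ (· -ᵥ p) '' (t \ {p}))
  have hb0 : ∀ v ∈ b, v ≠ (0 : V) := by
    rintro v hv rfl
    obtain ⟨q, hq, hqp⟩ := hbt hv
    exact hq.2 (vsub_eq_zero_iff_eq.mp hqp)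
  refine ⟨{p} ∪ (· +ᵥ p) '' b, ?_, ?_, ?_, ?_⟩
  · intro q hq
    by_cases hqp : q = p
    · exact Or.inl hqp
    · exact Or.inr ⟨q -ᵥ p, hsb ⟨q, ⟨hq, hqp⟩, rfl⟩, vsub_vadd q p⟩
  · rintro q (rfl | ⟨v, hv, rfl⟩)
    · exact hst hp
    · obtain ⟨q, hq, rfl⟩ := hbt hv
      simpa using hq.1
  · exact (linearIndependent_set_iff_affineIndependent_vadd_union_singleton k hb0 p).mp hb
  · refine affineSpan_singleton_union_vadd_eq_top_of_span_eq_top p (eq_top_iff.mpr ?_)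
    rw [Subtype.range_coe, ← AffineSubspace.direction_top k V P, ← ht, direction_affineSpan,
      vectorSpan_eq_span_vsub_set_right_ne k (hst hp)]
    exact Submodule.span_le.mpr htb

theorem exists_affineIndependent_subset_of_mem_convexHull {E : Type*} [AddCommGroup E]
    [Module ℝ E] {s : Set E} (hs : affineSpan ℝ s = ⊤) {x : E} (hx : x ∈ convexHull ℝ s) :
    ∃ u ⊆ s, AffineIndependent ℝ ((↑) : u → E) ∧ affineSpan ℝ u = ⊤ ∧ x ∈ convexHull ℝ u := by
  rw [convexHull_eq_union] at hx
  simp only [mem_iUnion] at hx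
  obtain ⟨T, hTs, hT, hxT⟩ := hx
  obtain ⟨u, hTu, hus, hu, hspan⟩ := hT.exists_extension_affineSpan_eq_top hTs hs
  exact ⟨u, hus, hu, hspan, convexHull_mono hTu hxT⟩

theorem Set.Finite.convexHull_extremePoints_convexHull {E : Type*} [AddCommGroup E]
    [Module ℝ E] [TopologicalSpace E] [T2Space E] [IsTopologicalAddGroup E]
    [ContinuousSMul ℝ E] [LocallyConvexSpace ℝ E] {s : Set E} (hs : s.Finite) :
    convexHull ℝ ((convexHull ℝ s).extremePoints ℝ) = convexHull ℝ s := by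
  have hfin : ((convexHull ℝ s).extremePoints ℝ).Finite :=
    hs.subset extremePoints_convexHull_subset
  rw [← (hfin.isClosed_convexHull ℝ).closure_eq]
  exact closure_convexHull_extremePoints (hs.isCompact_convexHull ℝ) (convex_convexHull ℝ s)

theorem exists_affineBasis_subset_extremePoints_of_mem_convexHull {E : Type*}
    [NormedAddCommGroup E] [NormedSpace ℝ E] {s : Set E} (hs : s.Finite)
    (hspan : affineSpan ℝ (convexHull ℝ s) = ⊤) {x : E} (hx : x ∈ convexHull ℝ s) :
    ∃ (u : Set E) (b : AffineBasis u ℝ E),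
      range b ⊆ (convexHull ℝ s).extremePoints ℝ ∧ x ∈ convexHull ℝ (range b) := by
  have hext := hs.convexHull_extremePoints_convexHull
  obtain ⟨u, hus, hu, huspan, hxu⟩ := exists_affineIndependent_subset_of_mem_convexHull
    (by rwa [← affineSpan_convexHull, hext]) (hext ▸ hx)
  let b : AffineBasis u ℝ E := ⟨(↑), hu, by rwa [Subtype.range_coe]⟩
  have hb : range b = u := Subtype.range_coe
  exact ⟨u, b, hb.symm ▸ hus, hb.symm ▸ hxu⟩

theorem affineSpan_eq_top_of_setDim_eq {n : ℕ} {P : Set (Fin n → ℝ)} (hP : P.Nonempty)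
    (hdim : setDim P = n) : affineSpan ℝ P = ⊤ := by
  rw [AffineSubspace.affineSpan_eq_top_iff_vectorSpan_eq_top_of_nonempty ℝ _ _ hP]
  exact Submodule.eq_top_of_finrank_eq (by rw [Module.finrank_fin_fun]; exact hdim)

theorem AffineBasis.sum_smul_mem_interior_smul_convexHull {ι E : Type*} [Fintype ι]
    [NormedAddCommGroup E] [NormedSpace ℝ E] (b : AffineBasis ι ℝ E) {μ : ι → ℝ}
    (hμ : ∀ i, 0 < μ i) :
    ∑ i, μ i • b i ∈ interior ((∑ i, μ i) • convexHull ℝ (range b)) := by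
  have : Nonempty ι := b.nonempty
  have hN : 0 < ∑ i, μ i := Finset.sum_pos (fun i _ => hμ i) Finset.univ_nonempty
  have hw : ∑ i, μ i / ∑ i, μ i = 1 := by rw [← Finset.sum_div, div_self hN.ne']
  rw [interior_smul₀ hN.ne', b.interior_convexHull]
  refine ⟨Finset.univ.affineCombination ℝ b fun i => μ i / ∑ i, μ i, fun i => ?_, ?_⟩
  · rw [b.coord_apply_combination_of_mem (Finset.mem_univ i) hw]
    exact div_pos (hμ i) hN
  · dsimp only
    rw [Finset.affineCombination_eq_linear_combination _ _ _ hw, Finset.smul_sum]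
    refine Finset.sum_congr rfl fun i _ => ?_
    rw [smul_smul, mul_div_cancel₀ _ hN.ne']

theorem sum_smul_mem_smul_convexHull {ι E : Type*} [Fintype ι] [AddCommGroup E] [Module ℝ E]
    (b : ι → E) {f : ι → ℝ} (hf : ∀ i, 0 ≤ f i) (hpos : 0 < ∑ i, f i) :
    ∑ i, f i • b i ∈ (∑ i, f i) • convexHull ℝ (range b) := by
  refine ⟨Finset.univ.centerMass f b, ?_, ?_⟩
  · exact Finset.univ.centerMass_mem_convexHull (fun i _ => hf i) hpos
      fun i _ => mem_range_self i
  · dsimp only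
    rw [Finset.centerMass, smul_smul, mul_inv_cancel₀ hpos.ne', one_smul]

/-- `IntPts n` as an additive subgroup, so that lattice points can be added and scaled. -/
def intLattice (n : ℕ) : AddSubgroup (Fin n → ℝ) :=
  (AddMonoidHom.compLeft (Int.castAddHom ℝ) (Fin n)).range

theorem mem_intLattice {n : ℕ} {x : Fin n → ℝ} :
    x ∈ intLattice n ↔ ∃ p : Fin n → ℤ, (fun l => (p l : ℝ)) = x :=
  Iff.rfl

theorem codegS_le_of_mem_interior {n N : ℕ} {P : Set (Fin n → ℝ)} (hN : 0 < N)
    {x : Fin n → ℝ} (hx : x ∈ intLattice n) (hxP : x ∈ interior ((N : ℝ) • P)) :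
    codegS P ≤ N := by
  obtain ⟨q, rfl⟩ := mem_intLattice.mp hx
  exact Nat.sInf_le ⟨hN, q, hxP⟩

section LatticeSimplex

variable {n : ℕ} {ι : Type*} [Fintype ι] {P : Set (Fin n → ℝ)}
  (b : AffineBasis ι ℝ (Fin n → ℝ))

theorem add_codegS_le_of_sum_smul_mem_intLattice (hb : ∀ i, b i ∈ intLattice n)
    (hbP : convexHull ℝ (range b) ⊆ P) {f : ι → ℝ} (hf : ∀ i, 0 ≤ f i ∧ f i < 1)
    (hfb : ∑ i, f i • b i ∈ intLattice n) {j : ℕ} (hj : ∑ i, f i = j) :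
    j + codegS P ≤ n + 1 := by
  have : Nonempty ι := b.nonempty
  have hcard : Fintype.card ι = n + 1 := by
    rw [b.card_eq_finrank_add_one, Module.finrank_fin_fun]
  have hjn : j < n + 1 := by
    have : (j : ℝ) < n + 1 := by
      calc (j : ℝ) = ∑ i, f i := hj.symm
        _ < ∑ _i : ι, (1 : ℝ) :=
          Finset.sum_lt_sum_of_nonempty Finset.univ_nonempty fun i _ => (hf i).2
        _ = n + 1 := by simp [hcard]
    exact_mod_cast this
  have hsum : ∑ i, (1 - f i) = ((n + 1 - j : ℕ) : ℝ) := by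
    rw [Finset.sum_sub_distrib, hj, Nat.cast_sub hjn.le]
    simp [hcard]
  have hq : ∑ i, (1 - f i) • b i ∈ intLattice n := by
    simp only [sub_smul, one_smul, Finset.sum_sub_distrib]
    exact sub_mem (sum_mem fun i _ => hb i) hfb
  have hqP := b.sum_smul_mem_interior_smul_convexHull fun i => sub_pos.mpr (hf i).2
  rw [hsum] at hqP
  have := codegS_le_of_mem_interior (Nat.sub_pos_of_lt hjn) hq
    (interior_mono (smul_set_mono hbP) hqP)
  omega

theorem exists_lattice_decomposition_of_mem_convexHull (hb : ∀ i, b i ∈ intLattice n)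
    (hbP : convexHull ℝ (range b) ⊆ P) {x : Fin n → ℝ} (hx : x ∈ convexHull ℝ (range b))
    {k : ℕ} (hkx : (k : ℝ) • x ∈ intLattice n) :
    ∃ (m : ι → ℕ) (j : ℕ) (p : Fin n → ℤ),
      (fun l => (p l : ℝ)) ∈ (j : ℝ) • P ∧
      (k : ℝ) • x = ∑ i, m i • b i + (fun l => (p l : ℝ)) ∧ k = ∑ i, m i + j ∧
      ((p = 0 ∧ j = 0) ∨ (1 ≤ j ∧ j + codegS P ≤ n + 1)) := by
  rw [b.convexHull_eq_nonneg_coord] at hx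
  obtain ⟨m, f, j, hf, hmf, hj, hk⟩ := exists_nat_add_fract_of_sum_eq_nat
    (w := fun i => k * b.coord i x) (fun i => mul_nonneg k.cast_nonneg (hx i))
    (by rw [← Finset.mul_sum, b.sum_coord_apply_eq_one, mul_one])
  have hkx' : (k : ℝ) • x = ∑ i, m i • b i + ∑ i, f i • b i := by
    conv_lhs => rw [← b.linear_combination_coord_eq_self x]
    simp only [Finset.smul_sum, smul_smul, ← Nat.cast_smul_eq_nsmul ℝ, ← Finset.sum_add_distrib,
      ← add_smul, ← hmf]
  obtain ⟨p, hp⟩ : ∃ p : Fin n → ℤ, (fun l => (p l : ℝ)) = ∑ i, f i • b i := by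
    rw [← mem_intLattice, eq_sub_of_add_eq' hkx'.symm]
    exact sub_mem hkx (sum_mem fun i _ => nsmul_mem (hb i) _)
  rcases Nat.eq_zero_or_pos j with rfl | hj0
  · have hf0 : ∀ i, f i = 0 := fun i =>
      (Finset.sum_eq_zero_iff_of_nonneg fun i _ => (hf i).1).mp (by simpa using hj) i
        (Finset.mem_univ i)
    have hp0 : (fun l => (p l : ℝ)) = 0 := by
      rw [hp]
      simp [hf0]
    obtain ⟨i⟩ := b.nonempty
    refine ⟨m, 0, p, ?_, hp ▸ hkx', hk,
      Or.inl ⟨funext fun l => by simpa using congrFun hp0 l, rfl⟩⟩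
    simpa [hp0] using
      smul_mem_smul_set (a := (0 : ℝ)) (hbP (subset_convexHull ℝ _ (mem_range_self i)))
  · refine ⟨m, j, p, ?_, hp ▸ hkx', hk,
      Or.inr ⟨hj0, add_codegS_le_of_sum_smul_mem_intLattice b hb hbP hf ⟨p, hp⟩ hj⟩⟩
    rw [hp, ← hj]
    exact smul_set_mono hbP
      (sum_smul_mem_smul_convexHull b (fun i => (hf i).1) (hj ▸ Nat.cast_pos.mpr hj0))

end LatticeSimplex

/-- Let `P ⊆ ℝⁿ` be an `n`-dimensional lattice polytope and let
`z ∈ pos(P × {1}) ∩ ℤ^{n+1}`. Then there are (not necessarily distinct) vertices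
`v₁, …, v_g` of `P` (possibly `g = 0`), an integer `j ≥ 0` and a lattice point
`p ∈ (jP) ∩ ℤⁿ` with `z = (v₁, 1) + ⋯ + (v_g, 1) + (p, j)`, where either
`(p, j) = (0, 0)` or `1 ≤ j ≤ n + 1 - cd(P)`. -/
theorem statement14 {n : ℕ} (V : Finset (Fin n → ℤ)) (P : Set (Fin n → ℝ))
    (hP : P = convexHull ℝ
      ((fun z : Fin n → ℤ => fun j => ((z j : ℝ))) '' (V : Set (Fin n → ℤ))))
    (hdim : setDim P = n)
    (z : (Fin n → ℝ) × ℝ)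
    (hz_int : (∃ zi : Fin n → ℤ, z.1 = fun j => ((zi j : ℝ))) ∧ (∃ k : ℤ, z.2 = (k : ℝ)))
    (hz_cone : ∃ c : ℝ, 0 ≤ c ∧ ∃ p ∈ P, z = c • (p, (1 : ℝ))) :
    ∃ (g : ℕ) (v : Fin g → (Fin n → ℝ)) (j : ℕ) (p : Fin n → ℤ),
      (∀ i, v i ∈ Set.extremePoints ℝ P) ∧
      (fun l => ((p l : ℝ))) ∈ (j : ℝ) • P ∧
      z = ((∑ i, v i) + fun l => ((p l : ℝ)), (g : ℝ) + (j : ℝ)) ∧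
      ((p = 0 ∧ j = 0) ∨ (1 ≤ j ∧ (j : ℤ) ≤ (n : ℤ) + 1 - (codegS P : ℤ))) := by
  obtain ⟨⟨zi, hzi⟩, kz, hkz⟩ := hz_int
  obtain ⟨c, hc, x, hxP, rfl⟩ := hz_cone
  obtain ⟨k, rfl⟩ : ∃ k : ℕ, c = k := by
    have hckz : c = kz := by simpa using hkz
    lift kz to ℕ using (by exact_mod_cast hckz ▸ hc)
    exact ⟨kz, mod_cast hckz⟩
  subst hP
  obtain ⟨u, b, hbE, hxb⟩ := exists_affineBasis_subset_extremePoints_of_mem_convexHull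
    (V.finite_toSet.image _) (affineSpan_eq_top_of_setDim_eq ⟨x, hxP⟩ hdim) hxP
  have := finite_of_fin_dim_affineIndependent ℝ b.ind
  have := Fintype.ofFinite u
  have hb : ∀ i, b i ∈ intLattice n := fun i => by
    obtain ⟨q, -, hq⟩ := extremePoints_convexHull_subset (hbE (mem_range_self i))
    exact ⟨q, hq⟩
  obtain ⟨m, j, p, hpP, hdec, hk, hcases⟩ := exists_lattice_decomposition_of_mem_convexHull b hb
    (convexHull_min (hbE.trans extremePoints_subset) (convex_convexHull ℝ _)) hxb
    (mem_intLattice.mpr ⟨zi, hzi.symm⟩)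
  obtain ⟨g, v, hv, hvsum, hg⟩ := exists_fin_sum_eq_sum_nsmul b m
  refine ⟨g, v, j, p, fun i => hbE (hv i), hpP, ?_, ?_⟩
  · simp only [Prod.smul_mk, smul_eq_mul, mul_one, Prod.mk.injEq]
    exact ⟨by rw [hdec, hvsum], by rw [hk, hg]; push_cast; ring⟩
  · exact hcases.imp_right fun h => ⟨h.1, by omega⟩

end
end

section
/- Let P ⊆ ℝ^n be an n-dimensional lattice simplex with facets F_0,…,F_n, opposite vertices v_0,…,v_n, and a_i := d_{F_i}(v_i). Then: (1) if μ(P) > (n+1)/2, or μ(P) = (n+1)/2 and a_i ≠ 2 for some i, then P is a lattice pyramid; (2) if μ(P) ≥ (n+1)/2 and P is not unimodularly equivalent to 2Δ_n, then P has lattice width one. -/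
open scoped BigOperators Pointwise

noncomputable section

/-!
Write `aᵢ = d_{Fᵢ}(vᵢ)`. The lattice distance to `Fᵢ` is `aᵢ` times the `i`-th barycentric
coordinate, so `P⁽ˢ⁾ ≠ ∅` iff `∑ s / aᵢ ≤ 1`, i.e. `μ(P) = ∑ 1 / aᵢ`. The `aᵢ` are positive
integers, so `μ(P) ≥ (n+1)/2` forces some `aᵢ = 1`, unless all `aᵢ = 2`. If `aᵢ = 1`, then `P` is
a pyramid with apex `vᵢ` over `Fᵢ`, and `⟨aᵢ, ·⟩` has width one on `P`. If all `aᵢ = 2`, the map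
`x ↦ (d_{F₁}(x), …, d_{Fₙ}(x))` sends `P` onto `2Δₙ` and `ℤⁿ` onto a lattice `Λ ⊇ 2ℤⁿ`. Either
`Λ = ℤⁿ` and the map is unimodular, or some nonempty set `S` of coordinates has even sum on all of
`Λ`; then half the sum of the normals of the facets indexed by `S` is an integer functional of
width one on `P`.
-/

namespace AffineBasis

section Field

variable {ι k V P : Type*} [Field k] [AddCommGroup V] [Module k V] [AddTorsor V P]
  (B : AffineBasis ι k P)

theorem apply_eq_mul_coord {i : ι} (f : P →ᵃ[k] k) (hf : ∀ j, j ≠ i → f (B j) = 0) (x : P) :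
    f x = f (B i) * B.coord i x := by
  suffices f = f (B i) • B.coord i by simpa using congr($this x)
  refine AffineMap.ext_on B.tot ?_
  rintro _ ⟨j, rfl⟩
  by_cases hj : j = i
  · simp [hj]
  · simp [hf j hj, B.coord_apply_ne (Ne.symm hj)]

theorem ext_elem_of_coord_succ {n : ℕ} (B : AffineBasis (Fin (n + 1)) k P) {x y : P}
    (h : ∀ j : Fin n, B.coord j.succ x = B.coord j.succ y) : x = y := by
  refine B.ext_elem (Fin.cases ?_ h)
  have hx := B.sum_coord_apply_eq_one x
  have hy := B.sum_coord_apply_eq_one y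
  rw [Fin.sum_univ_succ, Finset.sum_congr rfl fun j _ => h j] at hx
  rw [Fin.sum_univ_succ] at hy
  linear_combination hx - hy

end Field

section Ordered

variable {ι k E : Type*} [Field k] [LinearOrder k] [IsStrictOrderedRing k]
  [AddCommGroup E] [Module k E] (B : AffineBasis ι k E)

theorem coord_nonneg_of_mem_convexHull {x : E} (hx : x ∈ convexHull k (Set.range B)) (i : ι) :
    0 ≤ B.coord i x := by
  rw [B.convexHull_eq_nonneg_coord] at hx
  exact hx i

theorem sum_coord_le_one_of_mem_convexHull [Fintype ι] {x : E}
    (hx : x ∈ convexHull k (Set.range B)) (s : Finset ι) : ∑ i ∈ s, B.coord i x ≤ 1 :=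
  B.sum_coord_apply_eq_one x ▸ Finset.sum_le_sum_of_subset_of_nonneg (Finset.subset_univ s)
    fun i _ _ => B.coord_nonneg_of_mem_convexHull hx i

theorem coord_le_one_of_mem_convexHull [Fintype ι] {x : E}
    (hx : x ∈ convexHull k (Set.range B)) (i : ι) : B.coord i x ≤ 1 := by
  simpa using B.sum_coord_le_one_of_mem_convexHull hx {i}

theorem eq_of_coord_eq_one [Fintype ι] {x : E} (hx : x ∈ convexHull k (Set.range B)) {i : ι}
    (hi : B.coord i x = 1) : x = B i := by
  classical
  have hrest : ∑ j ∈ Finset.univ.erase i, B.coord j x = 0 := by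
    have := B.sum_coord_apply_eq_one x
    rw [← Finset.add_sum_erase _ _ (Finset.mem_univ i), hi] at this
    linarith
  refine B.ext_elem fun j => ?_
  obtain rfl | hj := eq_or_ne j i
  · simp [hi]
  · rw [B.coord_apply_ne hj]
    exact (Finset.sum_eq_zero_iff_of_nonneg fun l _ => B.coord_nonneg_of_mem_convexHull hx l).1
      hrest j (Finset.mem_erase.2 ⟨hj, Finset.mem_univ j⟩)

theorem mem_extremePoints_convexHull [Fintype ι] (i : ι) :
    B i ∈ (convexHull k (Set.range B)).extremePoints k := by
  rw [(convex_convexHull k _).mem_extremePoints_iff_mem_sdiff_convexHull_sdiff]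
  refine ⟨subset_convexHull k _ (Set.mem_range_self i), fun hi => ?_⟩
  -- the points of the simplex other than `B i` lie in the open half-space `coord i < 1`
  have hsub : convexHull k (convexHull k (Set.range B) \ {B i}) ⊆ {x | B.coord i x < 1} :=
    convexHull_min (fun x ⟨hx, hne⟩ => (B.coord_le_one_of_mem_convexHull hx i).lt_of_ne
      fun h => hne (B.eq_of_coord_eq_one hx h)) ((convex_Iio 1).affine_preimage (B.coord i))
  simpa using hsub hi

end Ordered

end AffineBasis

theorem ipair_intCast {n : ℕ} (a z : Fin n → ℤ) :
    ipair a (fun j => (z j : ℝ)) = ((a ⬝ᵥ z : ℤ) : ℝ) := by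
  simp [ipair, dotProduct]

section LatticeSimplex

variable {ι : Type*} {n : ℕ} (B : AffineBasis ι ℝ (Fin n → ℝ))

theorem AffineBasis.hasLatticeWidthOne_convexHull [Fintype ι] {u : Fin n → ℤ} {c : ℤ}
    {S : Finset ι} {i₀ i₁ : ι} (hi₀ : i₀ ∈ S) (hi₁ : i₁ ∉ S)
    (hu : ∀ x, ipair u x = c + ∑ i ∈ S, B.coord i x) :
    HasLatticeWidthOne (convexHull ℝ (Set.range B)) := by
  have h₀ : ipair u (B i₁) = c := by
    rw [hu, Finset.sum_eq_zero fun i hi => B.coord_apply_ne (ne_of_mem_of_not_mem hi hi₁),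
      add_zero]
  have h₁ : ipair u (B i₀) = c + 1 := by
    rw [hu, Finset.sum_eq_single_of_mem i₀ hi₀ fun i _ hi => B.coord_apply_ne hi,
      B.coord_apply_eq]
  have hu0 : u ≠ 0 := by
    rintro rfl
    simp [ipair] at h₀ h₁
    linarith
  refine ⟨u, hu0, c, fun x hx => ?_, ⟨B i₁, subset_convexHull ℝ _ ⟨i₁, rfl⟩, h₀⟩,
    ⟨B i₀, subset_convexHull ℝ _ ⟨i₀, rfl⟩, h₁⟩⟩
  rw [hu]
  exact ⟨le_add_of_nonneg_right
      (Finset.sum_nonneg fun i _ => B.coord_nonneg_of_mem_convexHull hx i),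
    (add_le_add_iff_left _).2 (B.sum_coord_le_one_of_mem_convexHull hx S)⟩

theorem AffineBasis.isLatticePyramid_convexHull {u : Fin n → ℤ} (hu : IsPrimitive u) {c : ℤ}
    {i : ι} (hcoord : ∀ x, ipair u x = c + B.coord i x) :
    IsLatticePyramid (convexHull ℝ (Set.range B)) := by
  refine ⟨u, hu, c, B i, subset_convexHull ℝ _ ⟨i, rfl⟩, by simp [hcoord], ?_⟩
  refine (convexHull_mono ?_).antisymm (convexHull_min ?_ (convex_convexHull ℝ _))
  · rintro _ ⟨j, rfl⟩
    obtain rfl | hj := eq_or_ne j i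
    · exact Or.inr rfl
    · exact Or.inl ⟨subset_convexHull ℝ _ ⟨j, rfl⟩, by simp [hcoord, B.coord_apply_ne hj.symm]⟩
  · rintro x (hx | rfl)
    · exact hx.1
    · exact subset_convexHull ℝ _ ⟨i, rfl⟩

end LatticeSimplex

theorem Submodule.exists_nonempty_even_sum_of_ne_top {ι : Type*} [Fintype ι]
    {Λ : Submodule ℤ (ι → ℤ)} (h2 : ∀ y, 2 • y ∈ Λ) (hΛ : Λ ≠ ⊤) :
    ∃ S : Finset ι, S.Nonempty ∧ ∀ y ∈ Λ, Even (∑ j ∈ S, y j) := by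
  classical
  let π : (ι → ℤ) →+ (ι → ZMod 2) := (Int.castAddHom (ZMod 2)).compLeft ι
  let Λ₂ := AddSubgroup.toZModSubmodule 2 (Λ.toAddSubgroup.map π)
  have hlt : Λ₂ < ⊤ := by
    refine lt_top_iff_ne_top.2 fun htop => hΛ (eq_top_iff.2 fun y _ => ?_)
    obtain ⟨y', hy', hπ⟩ : π y ∈ Λ.toAddSubgroup.map π := by
      rw [← AddSubgroup.mem_toZModSubmodule 2]
      change π y ∈ Λ₂
      simp [htop]
    have heven : ∀ j, Even (y j - y' j) := fun j => by
      rw [← ZMod.intCast_eq_zero_iff_even, Int.cast_sub, sub_eq_zero]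
      exact (congrFun hπ j).symm
    choose w hw using heven
    have hy : y = y' + 2 • w := by
      funext j
      simp only [Pi.add_apply, two_nsmul]
      linarith [hw j]
    exact hy ▸ Λ.add_mem hy' (h2 w)
  obtain ⟨φ, hφ0, hφ⟩ := Submodule.exists_le_ker_of_lt_top Λ₂ hlt
  set S := Finset.univ.filter fun i => φ (fun j => if i = j then 1 else 0) ≠ 0
  have hφS : ∀ g, φ g = ∑ i ∈ S, g i := fun g => by
    rw [φ.pi_apply_eq_sum_univ, Finset.sum_filter]
    refine Finset.sum_congr rfl fun i _ => ?_
    rcases (by decide : ∀ c : ZMod 2, c = 0 ∨ c = 1) (φ fun j => if i = j then 1 else 0)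
      with h | h <;> simp [h]
  refine ⟨S, Finset.nonempty_iff_ne_empty.2 fun hS => hφ0 (LinearMap.ext fun g => ?_),
    fun y hy => ?_⟩
  · simp [hφS, hS]
  · have hker : φ (π y) = 0 := hφ ((AddSubgroup.mem_toZModSubmodule 2).2 ⟨y, hy, rfl⟩)
    rw [hφS] at hker
    rw [← ZMod.intCast_eq_zero_iff_even, ← hker]
    push_cast
    rfl

theorem inv_natCast_le_half {a : ℕ} (ha : a ≠ 1) : (a : ℝ)⁻¹ ≤ 1 / 2 := by
  obtain rfl | ha0 := Nat.eq_zero_or_pos a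
  · norm_num
  · rw [one_div]
    exact inv_anti₀ two_pos (by exact_mod_cast (by omega : 2 ≤ a))

theorem inv_natCast_lt_half {a : ℕ} (ha1 : a ≠ 1) (ha2 : a ≠ 2) : (a : ℝ)⁻¹ < 1 / 2 := by
  obtain rfl | ha0 := Nat.eq_zero_or_pos a
  · norm_num
  · calc (a : ℝ)⁻¹ ≤ 3⁻¹ := inv_anti₀ (by norm_num) (by exact_mod_cast (by omega : 3 ≤ a))
      _ < 1 / 2 := by norm_num

theorem sum_inv_natCast_le_half_card {ι : Type*} [Fintype ι] {a : ι → ℕ} (ha : ∀ i, a i ≠ 1) :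
    ∑ i, (a i : ℝ)⁻¹ ≤ Fintype.card ι / 2 := by
  calc ∑ i, (a i : ℝ)⁻¹ ≤ ∑ _i : ι, (1 / 2 : ℝ) :=
        Finset.sum_le_sum fun i _ => inv_natCast_le_half (ha i)
    _ = Fintype.card ι / 2 := by simp [div_eq_mul_inv]

theorem sum_inv_natCast_lt_half_card {ι : Type*} [Fintype ι] {a : ι → ℕ} (ha : ∀ i, a i ≠ 1)
    (h2 : ∃ i, a i ≠ 2) : ∑ i, (a i : ℝ)⁻¹ < Fintype.card ι / 2 := by
  obtain ⟨i, hi⟩ := h2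
  calc ∑ i, (a i : ℝ)⁻¹ < ∑ _i : ι, (1 / 2 : ℝ) :=
        Finset.sum_lt_sum (fun i _ => inv_natCast_le_half (ha i))
          ⟨i, Finset.mem_univ i, inv_natCast_lt_half (ha i) hi⟩
    _ = Fintype.card ι / 2 := by simp [div_eq_mul_inv]

namespace PolyDesc

variable {n m : ℕ}

def dFAffine (D : PolyDesc n m) (i : Fin m) : (Fin n → ℝ) →ᵃ[ℝ] ℝ :=
  (dotProductEquiv ℝ (Fin n) (fun j => (D.A i j : ℝ))).toAffineMap -
    AffineMap.const ℝ (Fin n → ℝ) (D.b i : ℝ)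

@[simp] theorem coe_dFAffine (D : PolyDesc n m) (i : Fin m) : ⇑(D.dFAffine i) = D.dF i := rfl

theorem dim_pos (D : PolyDesc n m) : 0 < n := by
  obtain rfl | hn := Nat.eq_zero_or_pos n
  · exact ((D.prim ⟨0, D.hm⟩).1 (Subsingleton.elim _ _)).elim
  · exact hn

theorem exists_ne (D : PolyDesc n (n + 1)) (i : Fin (n + 1)) : ∃ j, j ≠ i :=
  have : Nontrivial (Fin (n + 1)) := Fin.nontrivial_iff_two_le.2 (by linarith [D.dim_pos])
  _root_.exists_ne i

theorem exists_affineBasis_coe_eq (D : PolyDesc n (n + 1))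
    {v : Fin (n + 1) → Fin n → ℝ} (hv : D.pts = convexHull ℝ (Set.range v)) :
    ∃ B : AffineBasis (Fin (n + 1)) ℝ (Fin n → ℝ), ⇑B = v := by
  have hrank : Module.finrank ℝ (vectorSpan ℝ (Set.range v)) = n := by
    rw [← direction_affineSpan, ← affineSpan_convexHull, ← hv, direction_affineSpan]
    exact D.fulldim
  have hind : AffineIndependent ℝ v :=
    (affineIndependent_iff_finrank_vectorSpan_eq ℝ v (Fintype.card_fin _)).2 hrank
  have htot : affineSpan ℝ (Set.range v) = ⊤ :=
    hind.affineSpan_eq_top_iff_card_eq_finrank_add_one.2 (by simp)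
  exact ⟨⟨v, hind, htot⟩, rfl⟩

def tailNormals (D : PolyDesc n (n + 1)) : Matrix (Fin n) (Fin n) ℤ :=
  Matrix.of fun j => D.A j.succ

def tailDist (D : PolyDesc n (n + 1)) : (Fin n → ℝ) →ᵃ[ℝ] (Fin n → ℝ) :=
  AffineMap.pi fun j => D.dFAffine j.succ

@[simp] theorem tailDist_apply (D : PolyDesc n (n + 1)) (x : Fin n → ℝ) (j : Fin n) :
    D.tailDist x j = D.dF j.succ x := rfl

theorem tailDist_intCast_sub (D : PolyDesc n (n + 1)) (z z' : Fin n → ℤ) :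
    D.tailDist (fun j => (z j : ℝ)) - D.tailDist (fun j => (z' j : ℝ)) =
      fun j => ((D.tailNormals.mulVec (z - z')) j : ℝ) := by
  funext j
  simp [dF, ipair, tailNormals, Matrix.mulVec, dotProduct, mul_sub, Finset.sum_sub_distrib]

structure IsSimplexWithVertices (D : PolyDesc n (n + 1))
    (v : AffineBasis (Fin (n + 1)) ℝ (Fin n → ℝ)) : Prop where
  pts_eq : D.pts = convexHull ℝ (Set.range v)
  dF_eq_zero : ∀ i j, i ≠ j → D.dF j (v i) = 0

namespace IsSimplexWithVertices

variable {D : PolyDesc n (n + 1)} {v : AffineBasis (Fin (n + 1)) ℝ (Fin n → ℝ)}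

theorem dF_eq_mul_coord (h : D.IsSimplexWithVertices v) (i : Fin (n + 1)) (x : Fin n → ℝ) :
    D.dF i x = D.dF i (v i) * v.coord i x :=
  v.apply_eq_mul_coord (D.dFAffine i) (fun j hj => h.dF_eq_zero j i hj) x

theorem vertex_mem (h : D.IsSimplexWithVertices v) (i : Fin (n + 1)) : v i ∈ D.pts :=
  h.pts_eq ▸ subset_convexHull ℝ _ ⟨i, rfl⟩

theorem dF_vertex_pos (h : D.IsSimplexWithVertices v) (i : Fin (n + 1)) : 0 < D.dF i (v i) := by
  refine (sub_nonneg.2 (h.vertex_mem i i)).lt_of_ne fun h0 => (D.prim i).1 (funext fun k => ?_)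
  have hz : ∀ x, D.dF i x = 0 := fun x => by
    rw [h.dF_eq_mul_coord, show D.dF i (v i) = 0 from h0.symm, zero_mul]
  simpa [dF, ipair, Pi.single_apply] using congrArg₂ (· - ·) (hz (Pi.single k 1)) (hz 0)

theorem qcd_eq (h : D.IsSimplexWithVertices v) : D.qcd = ∑ i, (D.dF i (v i))⁻¹ := by
  set T := ∑ i, (D.dF i (v i))⁻¹
  have hpos := h.dF_vertex_pos
  have hT : 0 < T := Finset.sum_pos (fun i _ => inv_pos.2 (hpos i)) Finset.univ_nonempty
  suffices IsGreatest D.qcdInvSet T⁻¹ by rw [qcd, qcdInv, this.csSup_eq, inv_inv]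
  have hdist : ∀ s x, x ∈ D.adj s ↔ ∀ i, s * (D.dF i (v i))⁻¹ ≤ v.coord i x := fun s x => by
    change s ≤ D.dist x ↔ _
    simp only [dist, Finset.le_inf'_iff, Finset.mem_univ, true_implies]
    refine forall_congr' fun i => ?_
    rw [h.dF_eq_mul_coord, ← div_eq_mul_inv, div_le_iff₀ (hpos i), mul_comm]
  refine ⟨⟨inv_pos.2 hT, ?_⟩, fun s ⟨hs, x, hx⟩ => ?_⟩
  · have hw : ∑ i, T⁻¹ * (D.dF i (v i))⁻¹ = 1 := by
      rw [← Finset.mul_sum, inv_mul_cancel₀ hT.ne']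
    refine ⟨Finset.univ.affineCombination ℝ v fun i => T⁻¹ * (D.dF i (v i))⁻¹, (hdist _ _).2 ?_⟩
    intro i
    rw [v.coord_apply_combination_of_mem (Finset.mem_univ i) hw]
  · rw [le_inv_comm₀ hs hT, ← mul_le_mul_iff_of_pos_left hs, mul_inv_cancel₀ hs.ne',
      Finset.mul_sum, ← v.sum_coord_apply_eq_one x]
    exact Finset.sum_le_sum fun i _ => (hdist s x).1 hx i

theorem exists_intCast_eq_vertex (h : D.IsSimplexWithVertices v) (hlat : IsLatticePoly D.pts)
    (i : Fin (n + 1)) : ∃ z : Fin n → ℤ, (fun j => (z j : ℝ)) = v i := by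
  obtain ⟨V, hV⟩ := hlat
  have hext := v.mem_extremePoints_convexHull i
  rw [← h.pts_eq, hV] at hext
  obtain ⟨z, -, hz⟩ := extremePoints_convexHull_subset hext
  exact ⟨z, hz⟩

theorem ipair_eq_add_mul_coord (h : D.IsSimplexWithVertices v) {i j : Fin (n + 1)}
    (hji : j ≠ i) (x : Fin n → ℝ) :
    ipair (D.A i) x = ipair (D.A i) (v j) + D.dF i (v i) * v.coord i x := by
  rw [← h.dF_eq_mul_coord]
  have hj := h.dF_eq_zero j i hji
  unfold dF at hj ⊢
  linarith

theorem exists_ipair_vertex_eq_intCast (h : D.IsSimplexWithVertices v)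
    (hlat : IsLatticePoly D.pts) (a : Fin n → ℤ) (i : Fin (n + 1)) :
    ∃ c : ℤ, ipair a (v i) = c := by
  obtain ⟨z, hz⟩ := h.exists_intCast_eq_vertex hlat i
  exact ⟨a ⬝ᵥ z, by rw [← hz, ipair_intCast]⟩

theorem exists_dF_vertex_eq_natCast (h : D.IsSimplexWithVertices v)
    (hlat : IsLatticePoly D.pts) : ∃ a : Fin (n + 1) → ℕ, ∀ i, D.dF i (v i) = a i := by
  suffices ∀ i, ∃ a : ℕ, D.dF i (v i) = a by
    choose a ha using this
    exact ⟨a, ha⟩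
  intro i
  obtain ⟨j, hj⟩ := D.exists_ne i
  obtain ⟨ci, hci⟩ := h.exists_ipair_vertex_eq_intCast hlat (D.A i) i
  obtain ⟨cj, hcj⟩ := h.exists_ipair_vertex_eq_intCast hlat (D.A i) j
  have hint : D.dF i (v i) = ((ci - cj : ℤ) : ℝ) := by
    have := h.ipair_eq_add_mul_coord hj (v i)
    rw [v.coord_apply_eq, mul_one, hci, hcj] at this
    push_cast
    linarith
  have hnonneg : 0 ≤ ci - cj := by exact_mod_cast hint ▸ (h.dF_vertex_pos i).le
  obtain ⟨a, ha⟩ := Int.eq_ofNat_of_zero_le hnonneg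
  exact ⟨a, by rw [hint, ha]; rfl⟩

theorem isLatticePyramid_of_dF_vertex_eq_one (h : D.IsSimplexWithVertices v)
    (hlat : IsLatticePoly D.pts) {i : Fin (n + 1)} (hi : D.dF i (v i) = 1) :
    IsLatticePyramid D.pts := by
  obtain ⟨j, hj⟩ := D.exists_ne i
  obtain ⟨c, hc⟩ := h.exists_ipair_vertex_eq_intCast hlat (D.A i) j
  rw [h.pts_eq]
  exact v.isLatticePyramid_convexHull (D.prim i) fun x => by
    rw [h.ipair_eq_add_mul_coord hj, hi, one_mul, hc]

theorem hasLatticeWidthOne_of_dF_vertex_eq_one (h : D.IsSimplexWithVertices v)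
    (hlat : IsLatticePoly D.pts) {i : Fin (n + 1)} (hi : D.dF i (v i) = 1) :
    HasLatticeWidthOne D.pts := by
  obtain ⟨j, hj⟩ := D.exists_ne i
  obtain ⟨c, hc⟩ := h.exists_ipair_vertex_eq_intCast hlat (D.A i) j
  rw [h.pts_eq]
  refine v.hasLatticeWidthOne_convexHull (u := D.A i) (c := c) (Finset.mem_singleton_self i)
    (Finset.notMem_singleton.2 hj) fun x => ?_
  rw [h.ipair_eq_add_mul_coord hj, hi, one_mul, hc, Finset.sum_singleton]

theorem tailDist_vertex_zero (h : D.IsSimplexWithVertices v) : D.tailDist (v 0) = 0 :=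
  funext fun j => h.dF_eq_zero 0 j.succ (Fin.succ_ne_zero j).symm

theorem tailDist_vertex_succ (h : D.IsSimplexWithVertices v) (h2 : ∀ i, D.dF i (v i) = 2)
    (k : Fin n) : D.tailDist (v k.succ) = (2 : ℝ) • stdBasisVec n k := by
  funext j
  by_cases hjk : j = k
  · simp [hjk, h2, stdBasisVec]
  · simp [hjk, stdBasisVec, h.dF_eq_zero k.succ j.succ (by simpa using Ne.symm hjk)]

theorem tailDist_bijective (h : D.IsSimplexWithVertices v) : Function.Bijective D.tailDist := by
  have hinj : Function.Injective D.tailDist := fun x y hxy =>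
    v.ext_elem_of_coord_succ fun j => by
      have hj := congrFun hxy j
      rw [tailDist_apply, tailDist_apply, h.dF_eq_mul_coord _ x, h.dF_eq_mul_coord _ y] at hj
      exact mul_left_cancel₀ (h.dF_vertex_pos _).ne' hj
  have hlin := D.tailDist.linear_injective_iff.2 hinj
  exact D.tailDist.linear_bijective_iff.1 ⟨hlin, LinearMap.injective_iff_surjective.1 hlin⟩

theorem two_smul_mem_range_tailNormals (h : D.IsSimplexWithVertices v)
    (hlat : IsLatticePoly D.pts) (h2 : ∀ i, D.dF i (v i) = 2) (y : Fin n → ℤ) :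
    2 • y ∈ LinearMap.range D.tailNormals.mulVecLin := by
  choose z hz using h.exists_intCast_eq_vertex hlat
  have hedge : ∀ k, D.tailNormals.mulVec (z k.succ - z 0) = 2 • Pi.single k 1 := fun k => by
    have hk := D.tailDist_intCast_sub (z k.succ) (z 0)
    rw [hz, hz, h.tailDist_vertex_succ h2, h.tailDist_vertex_zero, sub_zero] at hk
    funext j
    apply Int.cast_injective (α := ℝ)
    rw [← congrFun hk j]
    simp [stdBasisVec, Pi.single_apply]
  refine ⟨∑ k, y k • (z k.succ - z 0), ?_⟩
  rw [Matrix.mulVecLin_apply, Matrix.mulVec_sum]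
  simp_rw [Matrix.mulVec_smul, hedge]
  funext j
  simp [Finset.sum_apply, Pi.single_apply, mul_comm]

theorem unimodEquiv_of_range_tailNormals_eq_top (h : D.IsSimplexWithVertices v)
    (hlat : IsLatticePoly D.pts) (h2 : ∀ i, D.dF i (v i) = 2)
    (htop : LinearMap.range D.tailNormals.mulVecLin = ⊤) :
    UnimodEquiv D.pts ((2 : ℝ) • unimodSimplex n) := by
  obtain ⟨z₀, hz₀⟩ := h.exists_intCast_eq_vertex hlat 0
  have hlattice : ∀ z : Fin n → ℤ, D.tailDist (fun j => (z j : ℝ)) =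
      fun j => ((D.tailNormals.mulVec (z - z₀)) j : ℝ) := fun z => by
    rw [← D.tailDist_intCast_sub, hz₀, h.tailDist_vertex_zero, sub_zero]
  refine ⟨AffineEquiv.ofBijective h.tailDist_bijective, ?_, ?_⟩
  · ext w
    constructor
    · rintro ⟨_, ⟨z, rfl⟩, rfl⟩
      exact ⟨_, (hlattice z).symm⟩
    · rintro ⟨w, rfl⟩
      obtain ⟨y, hy⟩ : w ∈ LinearMap.range D.tailNormals.mulVecLin := htop ▸ Submodule.mem_top
      refine ⟨_, ⟨y + z₀, rfl⟩, ?_⟩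
      change D.tailDist _ = _
      rw [hlattice, add_sub_cancel_right, ← Matrix.mulVecLin_apply, hy]
  · change D.tailDist '' D.pts = _
    have hvert : Fin.tail (D.tailDist ∘ v) = fun k => (2 : ℝ) • stdBasisVec n k :=
      funext (h.tailDist_vertex_succ h2)
    rw [h.pts_eq, AffineMap.image_convexHull, ← Set.range_comp, Fin.range_fin_succ, hvert,
      Function.comp_apply, h.tailDist_vertex_zero, unimodSimplex, ← convexHull_smul,
      Set.smul_set_insert, smul_zero, Set.smul_set_range]

theorem hasLatticeWidthOne_of_even_sum (h : D.IsSimplexWithVertices v)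
    (hlat : IsLatticePoly D.pts) (h2 : ∀ i, D.dF i (v i) = 2) {S : Finset (Fin n)}
    (hS : S.Nonempty) (heven : ∀ y ∈ LinearMap.range D.tailNormals.mulVecLin,
      Even (∑ j ∈ S, y j)) :
    HasLatticeWidthOne D.pts := by
  have hcol : ∀ k, Even (∑ j ∈ S, D.A j.succ k) := fun k => by
    simpa [tailNormals, Matrix.mulVec_single_one] using heven _ ⟨Pi.single k 1, rfl⟩
  -- `u` is half the sum of the normals of the facets `Fⱼ₊₁`, `j ∈ S`
  choose u hu using fun k => even_iff_two_dvd.1 (hcol k)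
  have hpair : ∀ x, 2 * ipair u x = ∑ j ∈ S, ipair (D.A j.succ) x := fun x => by
    simp only [ipair, Finset.mul_sum, ← mul_assoc]
    rw [Finset.sum_comm]
    refine Finset.sum_congr rfl fun k _ => ?_
    rw [← Finset.sum_mul, ← Int.cast_sum, hu k]
    push_cast
    ring
  have hrow : ∀ x, ∀ j : Fin n,
      ipair (D.A j.succ) x = ipair (D.A j.succ) (v 0) + 2 * v.coord j.succ x := fun x j => by
    rw [h.ipair_eq_add_mul_coord (Fin.succ_ne_zero j).symm, h2]
  obtain ⟨c, hc⟩ := h.exists_ipair_vertex_eq_intCast hlat u 0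
  obtain ⟨s₀, hs₀⟩ := hS
  rw [h.pts_eq]
  refine v.hasLatticeWidthOne_convexHull (u := u) (c := c) (S := S.map (Fin.succEmb n))
    (i₁ := 0) (Finset.mem_map_of_mem _ hs₀) (by simp) fun x => ?_
  have hx := hpair x
  have h0 := hpair (v 0)
  simp only [hrow x, Finset.sum_add_distrib, ← Finset.mul_sum] at hx
  rw [Finset.sum_map, ← hc]
  simp only [Fin.coe_succEmb]
  linarith

theorem hasLatticeWidthOne_of_dF_vertex_eq_two (h : D.IsSimplexWithVertices v)
    (hlat : IsLatticePoly D.pts) (h2 : ∀ i, D.dF i (v i) = 2)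
    (hne : ¬ UnimodEquiv D.pts ((2 : ℝ) • unimodSimplex n)) :
    HasLatticeWidthOne D.pts := by
  by_cases htop : LinearMap.range D.tailNormals.mulVecLin = ⊤
  · exact (hne (h.unimodEquiv_of_range_tailNormals_eq_top hlat h2 htop)).elim
  · obtain ⟨S, hS, heven⟩ := Submodule.exists_nonempty_even_sum_of_ne_top
      (h.two_smul_mem_range_tailNormals hlat h2) htop
    exact h.hasLatticeWidthOne_of_even_sum hlat h2 hS heven

end IsSimplexWithVertices

end PolyDesc

/-- Let `P ⊆ ℝⁿ` be an `n`-dimensional lattice simplex with facets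
`F₀, …, Fₙ` and opposite vertices `v₀, …, vₙ`, and let `aᵢ = d_{Fᵢ}(vᵢ)`. Then:
(1) if `μ(P) > (n+1)/2`, or `μ(P) = (n+1)/2` and `aᵢ ≠ 2` for some `i`, then `P` is
a lattice pyramid; (2) if `μ(P) ≥ (n+1)/2` and `P` is not unimodularly equivalent to
`2Δₙ`, then `P` has lattice width one. -/
theorem statement19 {n : ℕ} (D : PolyDesc n (n + 1)) (hlat : IsLatticePoly D.pts)
    (v : Fin (n + 1) → (Fin n → ℝ))
    (hsimplex : D.pts = convexHull ℝ (Set.range v))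
    (hopp : ∀ i j : Fin (n + 1), i ≠ j → D.dF j (v i) = 0) :
    ((((n : ℝ) + 1) / 2 < D.qcd ∨
        (D.qcd = ((n : ℝ) + 1) / 2 ∧ ∃ i, D.dF i (v i) ≠ 2)) →
      IsLatticePyramid D.pts) ∧
    ((((n : ℝ) + 1) / 2 ≤ D.qcd ∧
        ¬ UnimodEquiv D.pts ((2 : ℝ) • unimodSimplex n)) →
      HasLatticeWidthOne D.pts) := by
  obtain ⟨B, rfl⟩ := D.exists_affineBasis_coe_eq hsimplex
  have h : D.IsSimplexWithVertices B := ⟨hsimplex, hopp⟩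
  obtain ⟨a, ha⟩ := h.exists_dF_vertex_eq_natCast hlat
  have hμ : D.qcd = ∑ i, (a i : ℝ)⁻¹ := by simp only [h.qcd_eq, ha]
  have hcard : (Fintype.card (Fin (n + 1)) : ℝ) / 2 = ((n : ℝ) + 1) / 2 := by simp
  refine ⟨fun hμ_ge => ?_, fun ⟨hμ_ge, hne⟩ => ?_⟩
  · obtain ⟨i, hi⟩ : ∃ i, a i = 1 := by
      by_contra! h1
      rcases hμ_ge with hlt | ⟨heq, i, hi⟩
      · linarith [sum_inv_natCast_le_half_card h1]
      · rw [ha] at hi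
        linarith [sum_inv_natCast_lt_half_card h1 ⟨i, by exact_mod_cast hi⟩]
    exact h.isLatticePyramid_of_dF_vertex_eq_one hlat (by rw [ha, hi, Nat.cast_one])
  · by_cases h1 : ∃ i, a i = 1
    · obtain ⟨i, hi⟩ := h1
      exact h.hasLatticeWidthOne_of_dF_vertex_eq_one hlat (by rw [ha, hi, Nat.cast_one])
    · rw [not_exists] at h1
      have h2 : ∀ i, a i = 2 := by
        by_contra! h2
        linarith [sum_inv_natCast_lt_half_card h1 h2]
      exact h.hasLatticeWidthOne_of_dF_vertex_eq_two hlat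
        (fun i => by rw [ha, h2, Nat.cast_ofNat]) hne

end
end
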